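/- arXiv:2312.03144 — 3 statements merged into one kernel-verified Lean document; each statement's English description precedes it below -/
import Mathlib

section
/- Let $\mathcal{D}$ be a brane diagram with labels $d_X$ on black lines. If a tie data $D$ exists for $\mathcal{D}$ (i.e., a set of blue-red pairs such that each black line $X$ is covered by exactly $d_X$ ties), then applying a Hanany–Witten transition at an adjacent (blue $U$, red $V$) pair with $U$ directly left of $V$—exchanging their positions and replacing the label $d_k$ between them by $\tilde{d}_k = d_{k-1} + d_{k+1} + 1 - d_k$—and replacing $D$ by $\psi(D) = D \setminus \{(U, V)\}$ if $(U, V) \in D$, or $D \cup \{(U, V)\}$ otherwise, yields a valid tie data for the new brane diagram: each black line of the new diagram is covered by exactly the required number of ties. -/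
/-- A brane diagram with `L` colored lines (colors `c : Fin L → Bool`, `true` = blue,
`false` = red; colored line `y` lies between black lines `y` and `y+1`) and black line labels
`d : Fin (L+1) → ℕ`.  A tie data is a finite set of pairs `(y₁, y₂)` of colored line positions
with `y₁ < y₂` and distinct colors, such that each black line `k` is covered by (i.e. strictly
between the endpoints of) exactly `d k` ties. -/
def IsTieData {L : ℕ} (c : Fin L → Bool) (d : Fin (L + 1) → ℕ)
    (D : Finset (Fin L × Fin L)) : Prop :=
  (∀ p ∈ D, p.1 < p.2 ∧ c p.1 ≠ c p.2) ∧
  ∀ k : Fin (L + 1),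
    (D.filter fun p => (p.1 : ℕ) < (k : ℕ) ∧ (k : ℕ) ≤ (p.2 : ℕ)).card = d k

set_option maxHeartbeats 1000000 in
theorem hw_aux {L : ℕ} (i : ℕ) (u v : Fin L) (a b w : Fin (L + 1))
    (hu : (u : ℕ) = i) (hv : (v : ℕ) = i + 1)
    (ha : (a : ℕ) = i) (hb : (b : ℕ) = i + 2) (hw : (w : ℕ) = i + 1)
    (c : Fin L → Bool) (d : Fin (L + 1) → ℕ)
    (D : Finset (Fin L × Fin L)) (hD : IsTieData c d D)
    (hblue : c u = true) (hred : c v = false) (dt : ℕ)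
    (hdt : d a + d b + 1 = d w + dt) :
    IsTieData (c ∘ Equiv.swap u v) (Function.update d w dt)
      (if (u, v) ∈ D then
        (D.erase (u, v)).image (Prod.map (Equiv.swap u v) (Equiv.swap u v))
      else
        insert (u, v) (D.image (Prod.map (Equiv.swap u v) (Equiv.swap u v)))) := by
  obtain ⟨h1, h2⟩ := hD
  set σ := Equiv.swap u v with hσdef
  -- value of σ on naturals
  have hσ : ∀ x : Fin L, ((σ x : Fin L) : ℕ) =
      if (x : ℕ) = i then i + 1 else if (x : ℕ) = i + 1 then (i : ℕ) else x := by
    intro x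
    rcases eq_or_ne x u with h | h
    · subst h; rw [Equiv.swap_apply_left, hv, if_pos hu]
    rcases eq_or_ne x v with h' | h'
    · subst h'
      rw [Equiv.swap_apply_right, hu]
      rw [if_neg, if_pos hv]
      omega
    · rw [Equiv.swap_apply_of_ne_of_ne h h']
      rw [if_neg, if_neg]
      · intro hh; exact h' (Fin.ext (by omega))
      · intro hh; exact h (Fin.ext (by omega))
  have hinj : Function.Injective (Prod.map σ σ) :=
    σ.injective.prodMap σ.injective
  -- (v, u) ∉ D
  have hvu : (v, u) ∉ D := by
    intro hmem
    have := (h1 _ hmem).1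
    simp only [Fin.lt_def] at this
    omega
  -- (u,v) ∉ image
  have huv_img : (u, v) ∉ D.image (Prod.map σ σ) := by
    intro hmem
    rw [Finset.mem_image] at hmem
    obtain ⟨q, hq, hq2⟩ := hmem
    have hvu_eq : Prod.map (⇑σ) (⇑σ) (v, u) = (u, v) := by
      simp only [Prod.map_apply, hσdef, Equiv.swap_apply_left, Equiv.swap_apply_right]
    have hqe : q = (v, u) := hinj (hq2.trans hvu_eq.symm)
    exact hvu (hqe ▸ hq)
  constructor
  · -- order and colors
    intro p hp
    have key : ∀ q ∈ D, q ≠ (u, v) →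
        (Prod.map σ σ q).1 < (Prod.map σ σ q).2 ∧
        (c ∘ σ) (Prod.map σ σ q).1 ≠ (c ∘ σ) (Prod.map σ σ q).2 := by
      intro q hq hne
      obtain ⟨ho, hc⟩ := h1 q hq
      refine ⟨?_, ?_⟩
      · simp only [Fin.lt_def, Prod.map_fst, Prod.map_snd] at ho ⊢
        rw [hσ, hσ]
        have hne' : ¬((q.1 : ℕ) = i ∧ (q.2 : ℕ) = i + 1) := by
          intro ⟨e1, e2⟩
          exact hne (Prod.ext (Fin.ext (show (q.1 : ℕ) = (u : ℕ) by omega))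
            (Fin.ext (show (q.2 : ℕ) = (v : ℕ) by omega)))
        split_ifs <;> omega
      · have hss : ∀ x, σ (σ x) = x := fun x => Equiv.swap_apply_self u v x
        simp only [Prod.map_fst, Prod.map_snd, Function.comp_apply, hss]
        exact hc
    split_ifs at hp with hmem
    · rw [Finset.mem_image] at hp
      obtain ⟨q, hq, rfl⟩ := hp
      exact key q (Finset.mem_of_mem_erase hq) (Finset.ne_of_mem_erase hq)
    · rcases Finset.mem_insert.1 hp with rfl | hp
      · refine ⟨?_, ?_⟩
        · simp only [Fin.lt_def]; omega
        · have e1 : σ u = v := Equiv.swap_apply_left u v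
          have e2 : σ v = u := Equiv.swap_apply_right u v
          simp only [Function.comp_apply, e1, e2, hblue, hred]
          simp
      · rw [Finset.mem_image] at hp
        obtain ⟨q, hq, rfl⟩ := hp
        exact key q hq (fun h => hmem (h ▸ hq))
  · -- cardinality
    intro k
    -- main counting identity for k = i+1
    have hQcard : (D.filter fun p => ((σ p.1 : Fin L) : ℕ) < i + 1 ∧ i + 1 ≤ ((σ p.2 : Fin L) : ℕ)).card
        + d w + 1 = d w + dt + (D.filter (fun p => p = (u, v))).card := by
      have e1 : d a = (D.filter fun p => (p.1 : ℕ) < i ∧ i ≤ (p.2 : ℕ)).card := by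
        rw [← h2 a, ha]
      have e2 : d w = (D.filter fun p => (p.1 : ℕ) < i + 1 ∧ i + 1 ≤ (p.2 : ℕ)).card := by
        rw [← h2 w, hw]
      have e3 : d b = (D.filter fun p => (p.1 : ℕ) < i + 2 ∧ i + 2 ≤ (p.2 : ℕ)).card := by
        rw [← h2 b, hb]
      have main : (D.filter fun p => ((σ p.1 : Fin L) : ℕ) < i + 1 ∧ i + 1 ≤ ((σ p.2 : Fin L) : ℕ)).card
          + (D.filter fun p => (p.1 : ℕ) < i + 1 ∧ i + 1 ≤ (p.2 : ℕ)).card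
          = (D.filter fun p => (p.1 : ℕ) < i ∧ i ≤ (p.2 : ℕ)).card
          + (D.filter fun p => (p.1 : ℕ) < i + 2 ∧ i + 2 ≤ (p.2 : ℕ)).card
          + (D.filter (fun p => p = (u, v))).card := by
        simp only [Finset.card_filter]
        rw [← Finset.sum_add_distrib, ← Finset.sum_add_distrib, ← Finset.sum_add_distrib]
        refine Finset.sum_congr rfl fun p hp => ?_
        have ho := (h1 p hp).1
        simp only [Fin.lt_def] at ho
        have hpe : (p = (u, v)) ↔ ((p.1 : ℕ) = i ∧ (p.2 : ℕ) = i + 1) := by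
          constructor
          · rintro rfl; exact ⟨hu, hv⟩
          · rintro ⟨e1, e2⟩
            exact Prod.ext (Fin.ext (show (p.1 : ℕ) = (u : ℕ) by omega))
              (Fin.ext (show (p.2 : ℕ) = (v : ℕ) by omega))
        have hx := hσ p.1
        have hy := hσ p.2
        rw [if_congr hpe rfl rfl]
        split_ifs at hx hy ⊢ <;> omega
      omega
    rcases eq_or_ne (k : ℕ) (i + 1) with hk | hk
    · -- k = w
      have hkw : k = w := Fin.ext (by omega)
      subst hkw
      rw [Function.update_self]
      have hQuv : ¬(((σ u : Fin L) : ℕ) < i + 1 ∧ i + 1 ≤ ((σ v : Fin L) : ℕ)) := by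
        rw [hσ u, hσ v]
        split_ifs <;> omega
      split_ifs with hmem
      · rw [Finset.filter_image, Finset.card_image_of_injective _ hinj]
        have heq : ((D.erase (u, v)).filter fun q =>
            ((Prod.map σ σ q).1 : ℕ) < (k : ℕ) ∧ (k : ℕ) ≤ ((Prod.map σ σ q).2 : ℕ)) =
            (D.filter fun p => ((σ p.1 : Fin L) : ℕ) < i + 1 ∧ i + 1 ≤ ((σ p.2 : Fin L) : ℕ)).erase (u, v) := by
          rw [Finset.filter_erase]
          congr 1
          refine Finset.filter_congr fun p _ => ?_
          simp only [Prod.map_fst, Prod.map_snd, hw]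
        have hnm : (u, v) ∉ D.filter fun p =>
            ((σ p.1 : Fin L) : ℕ) < i + 1 ∧ i + 1 ≤ ((σ p.2 : Fin L) : ℕ) := by
          rw [Finset.mem_filter]
          rintro ⟨-, h⟩
          exact hQuv h
        rw [heq, Finset.erase_eq_of_notMem hnm]
        have hcnt : (D.filter (fun p => p = (u, v))).card = 1 := by
          rw [Finset.filter_eq', if_pos hmem, Finset.card_singleton]
        omega
      · rw [Finset.filter_insert]
        have hcond : ((u : ℕ) < (k : ℕ) ∧ (k : ℕ) ≤ ((v : ℕ))) := by omega
        rw [if_pos hcond]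
        rw [Finset.card_insert_of_notMem (fun h => huv_img (Finset.mem_of_mem_filter _ h))]
        rw [Finset.filter_image, Finset.card_image_of_injective _ hinj]
        have heq : (D.filter fun q =>
            ((Prod.map σ σ q).1 : ℕ) < (k : ℕ) ∧ (k : ℕ) ≤ ((Prod.map σ σ q).2 : ℕ)) =
            D.filter fun p => ((σ p.1 : Fin L) : ℕ) < i + 1 ∧ i + 1 ≤ ((σ p.2 : Fin L) : ℕ) := by
          refine Finset.filter_congr fun p _ => ?_
          simp only [Prod.map_fst, Prod.map_snd, hw]
        rw [heq]
        have hcnt : (D.filter (fun p => p = (u, v))).card = 0 := by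
          rw [Finset.filter_eq', if_neg hmem, Finset.card_empty]
        omega
    · -- k ≠ w
      have hkw : k ≠ w := fun h => hk (h ▸ hw)
      rw [Function.update_of_ne hkw]
      have hpred : ∀ p : Fin L × Fin L,
          ((((Prod.map σ σ p).1 : Fin L) : ℕ) < (k : ℕ) ∧ (k : ℕ) ≤ (((Prod.map σ σ p).2 : Fin L) : ℕ))
          ↔ ((p.1 : ℕ) < (k : ℕ) ∧ (k : ℕ) ≤ (p.2 : ℕ)) := by
        intro p
        simp only [Prod.map_fst, Prod.map_snd]
        rw [hσ, hσ]
        split_ifs <;> omega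
      have hcnd_uv : ¬(((u : ℕ)) < (k : ℕ) ∧ (k : ℕ) ≤ ((v : ℕ))) := by omega
      split_ifs with hmem
      · rw [Finset.filter_image, Finset.card_image_of_injective _ hinj]
        have : ((D.erase (u, v)).filter fun q =>
            ((Prod.map σ σ q).1 : ℕ) < (k : ℕ) ∧ (k : ℕ) ≤ ((Prod.map σ σ q).2 : ℕ)) =
            (D.filter fun p => (p.1 : ℕ) < (k : ℕ) ∧ (k : ℕ) ≤ (p.2 : ℕ)).erase (u, v) := by
          rw [Finset.filter_erase]
          congr 1
          exact Finset.filter_congr fun p _ => by simpa using (hpred p)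
        have hnm : (u, v) ∉ D.filter fun p =>
            (p.1 : ℕ) < (k : ℕ) ∧ (k : ℕ) ≤ (p.2 : ℕ) := by
          rw [Finset.mem_filter]
          rintro ⟨-, h⟩
          exact hcnd_uv h
        rw [this, Finset.erase_eq_of_notMem hnm, h2 k]
      · rw [Finset.filter_insert, if_neg hcnd_uv]
        rw [Finset.filter_image, Finset.card_image_of_injective _ hinj]
        have : (D.filter fun q =>
            ((Prod.map σ σ q).1 : ℕ) < (k : ℕ) ∧ (k : ℕ) ≤ ((Prod.map σ σ q).2 : ℕ)) =
            D.filter fun p => (p.1 : ℕ) < (k : ℕ) ∧ (k : ℕ) ≤ (p.2 : ℕ) :=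
          Finset.filter_congr fun p _ => by simpa using (hpred p)
        rw [this, h2 k]

/-- If `D` is a tie data for the brane diagram `(c, d)` and `(c', d')` is
obtained by a Hanany–Witten transition at an adjacent blue/red pair at positions `i, i+1`
(swapping the two colored lines and replacing the middle label `d_{i+1}` by `d̃` with
`dᵢ + d_{i+2} + 1 = d_{i+1} + d̃`), then `ψ(D)` — relabel the endpoints by the transposition
`(i, i+1)` and toggle membership of the pair `(i, i+1)` — is a tie data for `(c', d')`. -/
theorem stmt13 (L i : ℕ) (hi : i + 1 < L)
    (c : Fin L → Bool) (d : Fin (L + 1) → ℕ)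
    (hd0 : d ⟨0, by omega⟩ = 0) (hdL : d ⟨L, by omega⟩ = 0)
    (D : Finset (Fin L × Fin L)) (hD : IsTieData c d D)
    (hblue : c ⟨i, by omega⟩ = true) (hred : c ⟨i + 1, hi⟩ = false)
    (dt : ℕ)
    (hdt : d ⟨i, by omega⟩ + d ⟨i + 2, by omega⟩ + 1 = d ⟨i + 1, by omega⟩ + dt) :
    IsTieData (c ∘ Equiv.swap ⟨i, by omega⟩ ⟨i + 1, hi⟩)
      (Function.update d ⟨i + 1, by omega⟩ dt)
      (if (⟨⟨i, by omega⟩, ⟨i + 1, hi⟩⟩ : Fin L × Fin L) ∈ D then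
        (D.erase ⟨⟨i, by omega⟩, ⟨i + 1, hi⟩⟩).image
          (Prod.map (Equiv.swap ⟨i, by omega⟩ ⟨i + 1, hi⟩)
            (Equiv.swap ⟨i, by omega⟩ ⟨i + 1, hi⟩))
      else
        insert (⟨⟨i, by omega⟩, ⟨i + 1, hi⟩⟩ : Fin L × Fin L)
          (D.image (Prod.map (Equiv.swap ⟨i, by omega⟩ ⟨i + 1, hi⟩)
            (Equiv.swap ⟨i, by omega⟩ ⟨i + 1, hi⟩)))) := by
  exact hw_aux i ⟨i, by omega⟩ ⟨i + 1, hi⟩ ⟨i, by omega⟩ ⟨i + 2, by omega⟩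
    ⟨i + 1, by omega⟩ rfl rfl rfl rfl rfl c d D hD hblue hred dt hdt
end

section
/- Let $X$ be a topological space with a $\mathbb{C}^*$-action and let $\pi: X \to V$ be a continuous equivariant map to a finite dimensional $\mathbb{C}^*$-representation $V = V^- \oplus V^0 \oplus V^+$ (negative, zero, positive weight spaces). Let $p, q$ be fixed points with $\bar\pi(p) \neq \bar\pi(q)$, where $\bar\pi = \mathrm{pr}_0 \circ \pi$ is the composition with projection to $V^0$. Then the closures of the attracting set of $p$ (w.r.t. $t \to 0$) and the repelling set of $q$ (attracting set w.r.t. $t \to \infty$) are disjoint. -/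
open Filter

/-- Let `π : X → V` be a continuous equivariant map to a finite dimensional
`ℂ*`-representation `V = ℂ^A` with weights `wt a` (so `V⁰` is the span of coordinates of weight
`0`).  If `p, q` are fixed points with distinct `V⁰`-components `π̄(p) ≠ π̄(q)`, then the
closures of the attracting set of `p` and the repelling set of `q` are disjoint. -/
theorem stmt14 {X : Type*} [TopologicalSpace X] {A : Type*} [Fintype A]
    (wt : A → ℤ) (ρ : ℂˣ → X → X)
    (hρ1 : ρ 1 = id) (hρm : ∀ s t, ρ (s * t) = ρ s ∘ ρ t)
    (π : X → (A → ℂ)) (hπ : Continuous π)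
    (hequiv : ∀ (t : ℂˣ) (x : X) (a : A), π (ρ t x) a = ((t ^ wt a : ℂˣ) : ℂ) * π x a)
    (p q : X) (hp : ∀ t, ρ t p = p) (hq : ∀ t, ρ t q = q)
    (hpq : (fun a => if wt a = 0 then π p a else 0) ≠
           (fun a => if wt a = 0 then π q a else 0)) :
    closure {x : X | Tendsto (fun t : ℂˣ => ρ t x)
        (comap (Units.val : ℂˣ → ℂ) (nhdsWithin 0 {0}ᶜ)) (nhds p)} ∩
      closure {x : X | Tendsto (fun t : ℂˣ => ρ t⁻¹ x)
        (comap (Units.val : ℂˣ → ℂ) (nhdsWithin 0 {0}ᶜ)) (nhds q)} = ∅ := by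
  set L : Filter ℂˣ := comap (Units.val : ℂˣ → ℂ) (nhdsWithin 0 {0}ᶜ) with hL
  have hLne : L.NeBot := by
    refine comap_neBot fun s hs => ?_
    have h0 : ({0}ᶜ : Set ℂ) ∈ nhdsWithin 0 {0}ᶜ := self_mem_nhdsWithin
    have : (s ∩ {0}ᶜ).Nonempty := by
      have : (nhdsWithin (0:ℂ) {0}ᶜ).NeBot := inferInstance
      exact Filter.nonempty_of_mem (inter_mem hs h0)
    rcases this with ⟨z, hzs, hz⟩
    exact ⟨Units.mk0 z hz, hzs⟩
  -- closed sets
  have hclosed : ∀ r : X, IsClosed {x : X | ∀ a, wt a = 0 → π x a = π r a} := by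
    intro r
    have : {x : X | ∀ a, wt a = 0 → π x a = π r a} =
        ⋂ a, ⋂ (_ : wt a = 0), {x : X | π x a = π r a} := by
      ext x; simp [Set.mem_iInter]
    rw [this]
    exact isClosed_iInter fun a => isClosed_iInter fun _ =>
      isClosed_eq ((continuous_apply a).comp hπ) continuous_const
  have key : ∀ (r : X) (x : X), Tendsto (fun t : ℂˣ => π (ρ t x)) L (nhds (π r)) →
      ∀ a, wt a = 0 → π x a = π r a := by
    intro r x hx a ha
    have h1 : Tendsto (fun t : ℂˣ => π (ρ t x) a) L (nhds (π r a)) :=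
      ((continuous_apply a).tendsto _).comp hx
    have h2 : (fun t : ℂˣ => π (ρ t x) a) = fun _ => π x a := by
      funext t
      rw [hequiv t x a, ha]
      simp
    rw [h2] at h1
    exact tendsto_nhds_unique tendsto_const_nhds h1
  -- pick a coordinate where they differ
  have hdiff : ∃ a, wt a = 0 ∧ π p a ≠ π q a := by
    by_contra h
    push_neg at h
    apply hpq
    funext a
    by_cases ha : wt a = 0
    · simp [ha, h a ha]
    · simp [ha]
  rcases hdiff with ⟨a, ha, hne⟩
  ext x
  simp only [Set.mem_inter_iff, Set.mem_empty_iff_false, iff_false, not_and]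
  intro hx1 hx2
  have hsub1 : closure {x : X | Tendsto (fun t : ℂˣ => ρ t x) L (nhds p)} ⊆
      {x : X | ∀ a, wt a = 0 → π x a = π p a} := by
    apply closure_minimal _ (hclosed p)
    intro y hy
    exact key p y (((hπ.tendsto p).comp hy)) 
  have hsub2 : closure {x : X | Tendsto (fun t : ℂˣ => ρ t⁻¹ x) L (nhds q)} ⊆
      {x : X | ∀ a, wt a = 0 → π x a = π q a} := by
    apply closure_minimal _ (hclosed q)
    intro y hy
    intro b hb
    have h1 : Tendsto (fun t : ℂˣ => π (ρ t⁻¹ y) b) L (nhds (π q b)) :=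
      ((continuous_apply b).tendsto _).comp ((hπ.tendsto q).comp hy)
    have h2 : (fun t : ℂˣ => π (ρ t⁻¹ y) b) = fun _ => π y b := by
      funext t
      rw [hequiv t⁻¹ y b, hb]
      simp
    rw [h2] at h1
    exact tendsto_nhds_unique tendsto_const_nhds h1
  exact hne ((hsub1 hx1 a ha).symm.trans (hsub2 hx2 a ha))
end

section
/- Let $V$ be a finite dimensional $\mathbb{C}^*$-representation with weight decomposition $V = V^- \oplus V^0 \oplus V^+$, and let $X$ be a variety with $\mathbb{C}^*$-action together with a proper equivariant morphism $\pi: X \to V$. For fixed points $p, q \in X^{\mathbb{C}^*}$ with $\pi(p) = \pi(q) = v \in V^0$, the intersection $\overline{\mathrm{Attr}(p)} \cap \overline{\mathrm{Attr}^{\mathrm{op}}(q)}$ of the closure of the attracting cell of $p$ with the closure of the opposite (repelling) cell of $q$ is contained in $\pi^{-1}(v)$, and hence is proper over $\mathbb{C}$. -/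
open Filter

noncomputable def Lfil : Filter ℂˣ := comap (Units.val : ℂˣ → ℂ) (nhdsWithin 0 {0}ᶜ)

lemma Lfil_neBot : Lfil.NeBot := by
  rw [Lfil, comap_neBot_iff]
  intro t ht
  have h1 : t ∩ {0}ᶜ ∈ nhdsWithin (0:ℂ) {0}ᶜ := inter_mem ht self_mem_nhdsWithin
  obtain ⟨z, hzt, hz0⟩ := Filter.nonempty_of_mem h1
  exact ⟨Units.mk0 z hz0, hzt⟩

lemma Lfil_val : Tendsto (Units.val : ℂˣ → ℂ) Lfil (nhds 0) :=
  tendsto_comap.mono_right nhdsWithin_le_nhds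

lemma Lfil_pow (n : ℕ) (hn : n ≠ 0) :
    Tendsto (fun t : ℂˣ => ((t : ℂ))^n) Lfil (nhds 0) := by
  have := Lfil_val.pow n
  rwa [zero_pow hn] at this

lemma key_zero (c w : ℂ)
    (h : Tendsto (fun t : ℂˣ => ((t ^ (0:ℤ) : ℂˣ) : ℂ) * c) Lfil (nhds w)) : c = w := by
  haveI := Lfil_neBot
  simp only [zpow_zero, Units.val_one, one_mul] at h
  exact tendsto_nhds_unique tendsto_const_nhds h

lemma key_neg (n : ℤ) (hn : n < 0) (c w : ℂ)
    (h : Tendsto (fun t : ℂˣ => ((t ^ n : ℂˣ) : ℂ) * c) Lfil (nhds w)) : c = 0 := by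
  haveI := Lfil_neBot
  have hpow := Lfil_pow (-n).toNat (by omega)
  have h2 : Tendsto (fun t : ℂˣ => ((t ^ n : ℂˣ) : ℂ) * c * ((t:ℂ))^((-n).toNat))
      Lfil (nhds (w * 0)) := h.mul hpow
  rw [mul_zero] at h2
  have h3 : ∀ t : ℂˣ, ((t ^ n : ℂˣ) : ℂ) * c * ((t:ℂ))^((-n).toNat) = c := by
    intro t
    have ht : (t:ℂ) ≠ 0 := t.ne_zero
    have : ((t:ℂ))^((-n).toNat) = (t:ℂ)^(-n) := by
      rw [← zpow_natCast, Int.toNat_of_nonneg (by omega)]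
    rw [this]
    push_cast
    rw [mul_comm _ c, mul_assoc, ← zpow_add₀ ht]
    simp
  rw [tendsto_congr h3] at h2
  exact tendsto_nhds_unique tendsto_const_nhds h2

/-- Let `π : X → V = ℂ^A` (weights `wt a`) be a proper continuous equivariant
map and `p, q` fixed points with `π(p) = π(q) = v ∈ V⁰`.  Then the intersection of the closure
of the attracting cell of `p` with the closure of the repelling cell of `q` is contained in
`π⁻¹(v)`, and hence is proper over `ℂ` (compact). -/
theorem stmt15 {X : Type*} [TopologicalSpace X] {A : Type*} [Fintype A]
    (wt : A → ℤ) (ρ : ℂˣ → X → X)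
    (hρ1 : ρ 1 = id) (hρm : ∀ s t, ρ (s * t) = ρ s ∘ ρ t)
    (π : X → (A → ℂ)) (hπ : Continuous π) (hproper : IsProperMap π)
    (hequiv : ∀ (t : ℂˣ) (x : X) (a : A), π (ρ t x) a = ((t ^ wt a : ℂˣ) : ℂ) * π x a)
    (p q : X) (hp : ∀ t, ρ t p = p) (hq : ∀ t, ρ t q = q)
    (v : A → ℂ) (hv : ∀ a, wt a ≠ 0 → v a = 0)
    (hπp : π p = v) (hπq : π q = v) :
    (closure {x : X | Tendsto (fun t : ℂˣ => ρ t x)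
        (comap (Units.val : ℂˣ → ℂ) (nhdsWithin 0 {0}ᶜ)) (nhds p)} ∩
      closure {x : X | Tendsto (fun t : ℂˣ => ρ t⁻¹ x)
        (comap (Units.val : ℂˣ → ℂ) (nhdsWithin 0 {0}ᶜ)) (nhds q)}
      ⊆ π ⁻¹' {v}) ∧
    IsCompact (closure {x : X | Tendsto (fun t : ℂˣ => ρ t x)
        (comap (Units.val : ℂˣ → ℂ) (nhdsWithin 0 {0}ᶜ)) (nhds p)} ∩
      closure {x : X | Tendsto (fun t : ℂˣ => ρ t⁻¹ x)
        (comap (Units.val : ℂˣ → ℂ) (nhdsWithin 0 {0}ᶜ)) (nhds q)}) := by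
  set Ap := {x : X | Tendsto (fun t : ℂˣ => ρ t x) Lfil (nhds p)} with hAp
  set Aq := {x : X | Tendsto (fun t : ℂˣ => ρ t⁻¹ x) Lfil (nhds q)} with hAq
  set Sp := {x : X | ∀ a, wt a ≤ 0 → π x a = v a} with hSp
  set Sq := {x : X | ∀ a, 0 ≤ wt a → π x a = v a} with hSq
  -- closedness of Sp, Sq
  have hclosed : ∀ (P : A → Prop), IsClosed {x : X | ∀ a, P a → π x a = v a} := by
    intro P
    have : {x : X | ∀ a, P a → π x a = v a} = ⋂ a, {x : X | P a → π x a = v a} := by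
      ext x; simp
    rw [this]
    refine isClosed_iInter fun a => ?_
    by_cases hPa : P a
    · have : {x : X | P a → π x a = v a} = (fun x => π x a) ⁻¹' {v a} := by
        ext x; simp [hPa]
      rw [this]
      exact isClosed_singleton.preimage ((continuous_apply a).comp hπ)
    · have : {x : X | P a → π x a = v a} = Set.univ := by
        ext x; simp [hPa]
      rw [this]; exact isClosed_univ
  -- attracting cell lands in Sp
  have hApSp : Ap ⊆ Sp := by
    intro x hx a ha
    have hπx : Tendsto (fun t : ℂˣ => π (ρ t x) a) Lfil (nhds (π p a)) :=
      ((continuous_apply a).comp hπ).continuousAt.tendsto.comp hx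
    have heq : (fun t : ℂˣ => π (ρ t x) a) = fun t : ℂˣ => ((t ^ wt a : ℂˣ) : ℂ) * π x a := by
      funext t; exact hequiv t x a
    rw [heq, hπp] at hπx
    rcases lt_or_eq_of_le ha with hlt | h0
    · rw [key_neg (wt a) hlt _ _ hπx, hv a (by omega)]
    · rw [h0] at hπx
      exact key_zero _ _ hπx
  -- repelling cell lands in Sq
  have hAqSq : Aq ⊆ Sq := by
    intro x hx a ha
    have hπx : Tendsto (fun t : ℂˣ => π (ρ t⁻¹ x) a) Lfil (nhds (π q a)) :=
      ((continuous_apply a).comp hπ).continuousAt.tendsto.comp hx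
    have heq : (fun t : ℂˣ => π (ρ t⁻¹ x) a)
        = fun t : ℂˣ => ((t ^ (-wt a) : ℂˣ) : ℂ) * π x a := by
      funext t
      rw [hequiv t⁻¹ x a, inv_zpow, ← zpow_neg]
    rw [heq, hπq] at hπx
    rcases lt_or_eq_of_le ha with hlt | h0
    · rw [key_neg (-wt a) (by omega) _ _ hπx, hv a (by omega)]
    · rw [← h0] at hπx
      simp only [neg_zero] at hπx
      exact key_zero _ _ hπx
  have hsub : closure Ap ∩ closure Aq ⊆ π ⁻¹' {v} := by
    intro x hx
    have h1 : x ∈ Sp := closure_minimal hApSp (hclosed _) hx.1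
    have h2 : x ∈ Sq := closure_minimal hAqSq (hclosed _) hx.2
    have : π x = v := by
      funext a
      rcases le_or_gt (wt a) 0 with h | h
      · exact h1 a h
      · exact h2 a h.le
    simpa using this
  refine ⟨hsub, ?_⟩
  have hKcpt : IsCompact (π ⁻¹' {v}) := hproper.isCompact_preimage isCompact_singleton
  exact hKcpt.of_isClosed_subset (isClosed_closure.inter isClosed_closure) hsub
end
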